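/- arXiv:2304.09690 — 5 statements merged into one kernel-verified Lean document; each statement's English description precedes it below -/
import Mathlib

section
/- Let P = {x_1,...,x_μ} be a population of bitstrings of length n and y ∈ {0,1}^n. Suppose y' is obtained from y by a mutation with equal per-bit flip probability χ/n (marginally), and P' = P ∪ {y'} \ {x_d} for uniformly random d ∈ [μ]. Then E[S(P')] = (1 - 2/μ)·S(P) + 2(μ-1)χ + (2(μ-1)/μ)(1 - 2χ/n)·S_P(y). -/
open Finset

/-- If the mutant `y'` of `y` satisfies
`E[H(z,y')] = χ + (1-2χ/n)·H(z,y)` for every `z`, and `y'` replaces a uniformly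
random member of the population (independently of the mutation), then
`E[S(P')] = (1-2/μ)·S(P) + 2(μ-1)χ + (2(μ-1)/μ)(1-2χ/n)·S_P(y)`. -/
theorem stmt_4 {Ω : Type*} [Fintype Ω] (n μ : ℕ) (hn : 0 < n) (hμ : 0 < μ)
    (p : Ω → ℝ) (hp : ∀ ω, 0 ≤ p ω) (hsum : ∑ ω, p ω = 1)
    (x : Fin μ → (Fin n → Bool)) (y : Fin n → Bool) (y' : Ω → (Fin n → Bool)) (χ : ℝ)
    (hmut : ∀ z : Fin n → Bool,
      ∑ ω, p ω * (hammingDist z (y' ω) : ℝ)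
        = χ + (1 - 2 * χ / n) * (hammingDist z y : ℝ)) :
    (1 / (μ : ℝ)) * ∑ d : Fin μ, ∑ ω, p ω *
        (∑ i : Fin μ, ∑ j : Fin μ,
          (hammingDist (Function.update x d (y' ω) i) (Function.update x d (y' ω) j) : ℝ))
      = (1 - 2 / (μ : ℝ)) * (∑ i : Fin μ, ∑ j : Fin μ, (hammingDist (x i) (x j) : ℝ))
        + 2 * ((μ : ℝ) - 1) * χ
        + (2 * ((μ : ℝ) - 1) / (μ : ℝ)) * (1 - 2 * χ / n) *
            ∑ i : Fin μ, (hammingDist (x i) y : ℝ) := by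
  have hμ' : (μ : ℝ) ≠ 0 := Nat.cast_ne_zero.mpr hμ.ne'
  set c : ℝ := 1 - 2 * χ / n with hc
  set S : ℝ := ∑ i : Fin μ, ∑ j : Fin μ, (hammingDist (x i) (x j) : ℝ) with hS
  set A : (Fin n → Bool) → ℝ := fun w => ∑ i : Fin μ, (hammingDist (x i) w : ℝ) with hA
  set T : Fin μ → ℝ := fun d => ∑ j : Fin μ, (hammingDist (x d) (x j) : ℝ) with hT
  -- key deterministic identity
  have key : ∀ (d : Fin μ) (w : Fin n → Bool),
      (∑ i : Fin μ, ∑ j : Fin μ,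
        (hammingDist (Function.update x d w i) (Function.update x d w j) : ℝ))
      = S - 2 * T d + 2 * A w - 2 * (hammingDist (x d) w : ℝ) := by
    intro d w
    have hud : Function.update x d w d = w := Function.update_self d w x
    have hx : ∀ i, i ≠ d → Function.update x d w i = x i :=
      fun i h => Function.update_of_ne h w x
    have inner_ne : ∀ i, i ≠ d →
        (∑ j : Fin μ, (hammingDist (Function.update x d w i) (Function.update x d w j) : ℝ))
        = T i - (hammingDist (x i) (x d) : ℝ) + (hammingDist (x i) w : ℝ) := by
      intro i hi
      rw [← Finset.sum_erase_add _ _ (mem_univ d), hud, hx i hi]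
      have h1 : ∑ j ∈ univ.erase d, (hammingDist (x i) (Function.update x d w j) : ℝ)
          = ∑ j ∈ univ.erase d, (hammingDist (x i) (x j) : ℝ) :=
        Finset.sum_congr rfl fun j hj => by rw [hx j (Finset.mem_erase.mp hj).1]
      rw [h1, Finset.sum_erase_eq_sub (mem_univ d)]
    have inner_d :
        (∑ j : Fin μ, (hammingDist (Function.update x d w d) (Function.update x d w j) : ℝ))
        = A w - (hammingDist (x d) w : ℝ) := by
      rw [← Finset.sum_erase_add _ _ (mem_univ d), hud, hammingDist_self]
      have h1 : ∑ j ∈ univ.erase d, (hammingDist w (Function.update x d w j) : ℝ)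
          = ∑ j ∈ univ.erase d, (hammingDist (x j) w : ℝ) :=
        Finset.sum_congr rfl fun j hj => by
          rw [hx j (Finset.mem_erase.mp hj).1, hammingDist_comm]
      rw [h1, Finset.sum_erase_eq_sub (mem_univ d)]
      simp [hA]
    rw [← Finset.sum_erase_add _ _ (mem_univ d), inner_d]
    have h2 : ∑ i ∈ univ.erase d,
        (∑ j : Fin μ, (hammingDist (Function.update x d w i) (Function.update x d w j) : ℝ))
        = ∑ i ∈ univ.erase d,
            (T i - (hammingDist (x i) (x d) : ℝ) + (hammingDist (x i) w : ℝ)) :=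
      Finset.sum_congr rfl fun i hi => inner_ne i (Finset.mem_erase.mp hi).1
    rw [h2]
    have h3 : ∑ i ∈ univ.erase d,
        (T i - (hammingDist (x i) (x d) : ℝ) + (hammingDist (x i) w : ℝ))
        = (∑ i : Fin μ, T i) - T d
          - ((∑ i : Fin μ, (hammingDist (x i) (x d) : ℝ)) - (hammingDist (x d) (x d) : ℝ))
          + ((∑ i : Fin μ, (hammingDist (x i) w : ℝ)) - (hammingDist (x d) w : ℝ)) := by
      rw [Finset.sum_add_distrib, Finset.sum_sub_distrib,
        Finset.sum_erase_eq_sub (mem_univ d), Finset.sum_erase_eq_sub (mem_univ d),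
        Finset.sum_erase_eq_sub (mem_univ d)]
    rw [h3, hammingDist_self]
    have h4 : (∑ i : Fin μ, (hammingDist (x i) (x d) : ℝ)) = T d := by
      simp only [hT]
      exact Finset.sum_congr rfl fun i _ => by rw [hammingDist_comm]
    have h5 : (∑ i : Fin μ, T i) = S := rfl
    rw [h4, h5]
    simp only [hA]
    ring
  -- expectation over ω for fixed d
  have exp_d : ∀ d : Fin μ,
      (∑ ω, p ω * (∑ i : Fin μ, ∑ j : Fin μ,
          (hammingDist (Function.update x d (y' ω) i) (Function.update x d (y' ω) j) : ℝ)))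
      = S - 2 * T d + 2 * ((μ : ℝ) * χ + c * A y)
          - 2 * (χ + c * (hammingDist (x d) y : ℝ)) := by
    intro d
    have e1 : ∀ ω : Ω, p ω * (∑ i : Fin μ, ∑ j : Fin μ,
          (hammingDist (Function.update x d (y' ω) i) (Function.update x d (y' ω) j) : ℝ))
        = p ω * (S - 2 * T d) + 2 * (p ω * A (y' ω))
            - 2 * (p ω * (hammingDist (x d) (y' ω) : ℝ)) := by
      intro ω; rw [key d (y' ω)]; ring
    rw [Finset.sum_congr rfl fun ω _ => e1 ω]
    rw [Finset.sum_sub_distrib, Finset.sum_add_distrib, ← Finset.sum_mul,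
      ← Finset.mul_sum, ← Finset.mul_sum, hsum, hmut (x d)]
    have e2 : (∑ ω, p ω * A (y' ω)) = (μ : ℝ) * χ + c * A y := by
      simp only [hA, Finset.mul_sum]
      rw [Finset.sum_comm]
      have e3 : ∀ i : Fin μ, (∑ ω, p ω * (hammingDist (x i) (y' ω) : ℝ))
          = χ + c * (hammingDist (x i) y : ℝ) := fun i => hmut (x i)
      rw [Finset.sum_congr rfl fun i _ => e3 i, Finset.sum_add_distrib, ← Finset.mul_sum]
      simp [Finset.card_univ]
    rw [e2]; ring
  have hsplit : ∀ d : Fin μ,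
      S - 2 * T d + 2 * ((μ : ℝ) * χ + c * A y) - 2 * (χ + c * (hammingDist (x d) y : ℝ))
      = (S + 2 * ((μ : ℝ) * χ + c * A y) - 2 * χ) - 2 * T d
          - (2 * c) * (hammingDist (x d) y : ℝ) := fun d => by ring
  have hTS : (∑ d : Fin μ, T d) = S := rfl
  have hAy : (∑ d : Fin μ, (hammingDist (x d) y : ℝ)) = A y := rfl
  rw [Finset.sum_congr rfl fun d _ => (exp_d d).trans (hsplit d),
    Finset.sum_sub_distrib, Finset.sum_sub_distrib, ← Finset.mul_sum, ← Finset.mul_sum,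
    hTS, hAy, Finset.sum_const, Finset.card_univ, Fintype.card_fin, nsmul_eq_mul]
  field_simp
  ring
end

section
/- Suppose a random search point y satisfies E[S_P(y)] = S(P)/μ, y' is obtained from y by a mutation with equal marginal per-bit flip probability χ/n, and P' = P ∪ {y'} \ {x_d} for uniformly random d ∈ [μ]. Then E[S(P')] = (1 - 2/μ² - 4(μ-1)χ/(μ²n))·S(P) + 2(μ-1)χ. -/
open Finset

/-- If a random `y` satisfies `E[S_P(y)] = S(P)/μ`, the mutant `y'`
satisfies `E[H(z,y')] = χ + (1-2χ/n)·E[H(z,y)]` for every `z`, and `y'` replaces a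
uniformly random member, then
`E[S(P')] = (1 - 2/μ² - 4(μ-1)χ/(μ²n))·S(P) + 2(μ-1)χ`. -/
theorem stmt_5 {Ω : Type*} [Fintype Ω] (n μ : ℕ) (hn : 0 < n) (hμ : 0 < μ)
    (p : Ω → ℝ) (hp : ∀ ω, 0 ≤ p ω) (hsum : ∑ ω, p ω = 1)
    (x : Fin μ → (Fin n → Bool)) (y y' : Ω → (Fin n → Bool)) (χ : ℝ)
    (hy : ∑ ω, p ω * (∑ i : Fin μ, (hammingDist (x i) (y ω) : ℝ))
        = (∑ i : Fin μ, ∑ j : Fin μ, (hammingDist (x i) (x j) : ℝ)) / (μ : ℝ))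
    (hmut : ∀ z : Fin n → Bool,
      ∑ ω, p ω * (hammingDist z (y' ω) : ℝ)
        = χ + (1 - 2 * χ / n) * ∑ ω, p ω * (hammingDist z (y ω) : ℝ)) :
    (1 / (μ : ℝ)) * ∑ d : Fin μ, ∑ ω, p ω *
        (∑ i : Fin μ, ∑ j : Fin μ,
          (hammingDist (Function.update x d (y' ω) i) (Function.update x d (y' ω) j) : ℝ))
      = (1 - 2 / (μ : ℝ) ^ 2 - 4 * ((μ : ℝ) - 1) * χ / ((μ : ℝ) ^ 2 * n)) *
          (∑ i : Fin μ, ∑ j : Fin μ, (hammingDist (x i) (x j) : ℝ))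
        + 2 * ((μ : ℝ) - 1) * χ := by
  classical
  have hμ0 : (μ : ℝ) ≠ 0 := Nat.cast_ne_zero.mpr hμ.ne'
  have hn0 : (n : ℝ) ≠ 0 := Nat.cast_ne_zero.mpr hn.ne'
  set S : ℝ := ∑ i : Fin μ, ∑ j : Fin μ, (hammingDist (x i) (x j) : ℝ) with hSdef
  set c : ℝ := 1 - 2 * χ / n with hcdef
  -- key combinatorial identity
  have key : ∀ (d : Fin μ) (v : Fin n → Bool),
      (∑ i : Fin μ, ∑ j : Fin μ,
        (hammingDist (Function.update x d v i) (Function.update x d v j) : ℝ))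
      = S - 2 * (∑ j : Fin μ, (hammingDist (x d) (x j) : ℝ))
        + 2 * (∑ j : Fin μ, (hammingDist (x j) v : ℝ))
        - 2 * (hammingDist (x d) v : ℝ) := by
    intro d v
    set u := Function.update x d v with hu
    have hud : u d = v := Function.update_self d v x
    have hune : ∀ i, i ≠ d → u i = x i := fun i hi => Function.update_of_ne hi v x
    set E := (univ : Finset (Fin μ)).erase d with hE
    have hmem : ∀ i ∈ E, i ≠ d := fun i hi => Finset.ne_of_mem_erase hi
    -- split each full sum into erase-part plus the d-term
    have hsplit : ∀ f : Fin μ → ℝ, ∑ i : Fin μ, f i = (∑ i ∈ E, f i) + f d :=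
      fun f => (Finset.sum_erase_add _ _ (mem_univ d)).symm
    have lhs_eq :
        (∑ i : Fin μ, ∑ j : Fin μ, (hammingDist (u i) (u j) : ℝ))
        = (∑ i ∈ E, ∑ j ∈ E, (hammingDist (x i) (x j) : ℝ))
          + (∑ i ∈ E, (hammingDist (x i) v : ℝ))
          + (∑ j ∈ E, (hammingDist v (x j) : ℝ)) := by
      rw [hsplit (fun i => ∑ j : Fin μ, (hammingDist (u i) (u j) : ℝ))]
      have h1 : ∑ i ∈ E, ∑ j : Fin μ, (hammingDist (u i) (u j) : ℝ)
          = ∑ i ∈ E, ((∑ j ∈ E, (hammingDist (x i) (x j) : ℝ)) + (hammingDist (x i) v : ℝ)) := by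
        refine Finset.sum_congr rfl fun i hi => ?_
        rw [hsplit (fun j => (hammingDist (u i) (u j) : ℝ))]
        rw [hud, hune i (hmem i hi)]
        congr 1
        refine Finset.sum_congr rfl fun j hj => ?_
        rw [hune j (hmem j hj)]
      have h2 : ∑ j : Fin μ, (hammingDist (u d) (u j) : ℝ)
          = ∑ j ∈ E, (hammingDist v (x j) : ℝ) := by
        rw [hsplit (fun j => (hammingDist (u d) (u j) : ℝ)), hud]
        have : (hammingDist v v : ℝ) = 0 := by simp
        rw [this, add_zero]
        refine Finset.sum_congr rfl fun j hj => ?_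
        rw [hune j (hmem j hj)]
      rw [h1, h2, Finset.sum_add_distrib]
    have hRd : ∑ i ∈ E, (hammingDist (x i) (x d) : ℝ)
        = (∑ j : Fin μ, (hammingDist (x d) (x j) : ℝ)) - (hammingDist (x d) (x d) : ℝ) := by
      have := hsplit (fun i => (hammingDist (x i) (x d) : ℝ))
      have hcomm : ∀ i, (hammingDist (x i) (x d) : ℝ) = (hammingDist (x d) (x i) : ℝ) := by
        intro i; rw [hammingDist_comm]
      simp only [hcomm] at this ⊢
      linarith [this]
    have hSd : (hammingDist (x d) (x d) : ℝ) = 0 := by simp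
    have hA : (∑ i ∈ E, ∑ j ∈ E, (hammingDist (x i) (x j) : ℝ))
        = S - 2 * (∑ j : Fin μ, (hammingDist (x d) (x j) : ℝ)) := by
      have hS1 : S = (∑ i ∈ E, ∑ j : Fin μ, (hammingDist (x i) (x j) : ℝ))
          + (∑ j : Fin μ, (hammingDist (x d) (x j) : ℝ)) :=
        hsplit (fun i => ∑ j : Fin μ, (hammingDist (x i) (x j) : ℝ))
      have hS2 : (∑ i ∈ E, ∑ j : Fin μ, (hammingDist (x i) (x j) : ℝ))
          = (∑ i ∈ E, ∑ j ∈ E, (hammingDist (x i) (x j) : ℝ))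
            + (∑ i ∈ E, (hammingDist (x i) (x d) : ℝ)) := by
        rw [← Finset.sum_add_distrib]
        refine Finset.sum_congr rfl fun i _ => ?_
        exact hsplit (fun j => (hammingDist (x i) (x j) : ℝ))
      rw [hS2, hRd, hSd] at hS1
      linarith
    have hcv : ∑ j ∈ E, (hammingDist v (x j) : ℝ)
        = (∑ j : Fin μ, (hammingDist (x j) v : ℝ)) - (hammingDist (x d) v : ℝ) := by
      have := hsplit (fun j => (hammingDist (x j) v : ℝ))
      have hcomm : ∀ j, (hammingDist v (x j) : ℝ) = (hammingDist (x j) v : ℝ) := by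
        intro j; rw [hammingDist_comm]
      simp only [hcomm]
      linarith [this]
    have hiv : ∑ i ∈ E, (hammingDist (x i) v : ℝ)
        = (∑ j : Fin μ, (hammingDist (x j) v : ℝ)) - (hammingDist (x d) v : ℝ) := by
      have := hsplit (fun j => (hammingDist (x j) v : ℝ))
      linarith [this]
    rw [lhs_eq, hA, hcv, hiv]
    ring
  -- expectation facts
  have hyswap : ∑ j : Fin μ, ∑ ω, p ω * (hammingDist (x j) (y ω) : ℝ) = S / μ := by
    rw [Finset.sum_comm]
    simpa [Finset.mul_sum] using hy
  have hT : ∑ ω, p ω * (∑ j : Fin μ, (hammingDist (x j) (y' ω) : ℝ))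
      = (μ : ℝ) * χ + c * (S / μ) := by
    have h1 : ∑ ω, p ω * (∑ j : Fin μ, (hammingDist (x j) (y' ω) : ℝ))
        = ∑ j : Fin μ, ∑ ω, p ω * (hammingDist (x j) (y' ω) : ℝ) := by
      rw [Finset.sum_comm]
      simp [Finset.mul_sum]
    rw [h1]
    have h2 : ∀ j : Fin μ, ∑ ω, p ω * (hammingDist (x j) (y' ω) : ℝ)
        = χ + c * ∑ ω, p ω * (hammingDist (x j) (y ω) : ℝ) := fun j => hmut (x j)
    rw [Finset.sum_congr rfl fun j _ => h2 j, Finset.sum_add_distrib, Finset.sum_const,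
      ← Finset.mul_sum, hyswap]
    simp [mul_comm]
  have hEd : ∑ d : Fin μ, ∑ ω, p ω * (hammingDist (x d) (y' ω) : ℝ)
      = (μ : ℝ) * χ + c * (S / μ) := by
    rw [Finset.sum_congr rfl fun d _ => hmut (x d), Finset.sum_add_distrib, Finset.sum_const,
      ← Finset.mul_sum, hyswap]
    simp [mul_comm]
  -- rewrite LHS using key
  have hmain : ∑ d : Fin μ, ∑ ω, p ω *
        (∑ i : Fin μ, ∑ j : Fin μ,
          (hammingDist (Function.update x d (y' ω) i) (Function.update x d (y' ω) j) : ℝ))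
      = (μ : ℝ) * S - 2 * S + 2 * (μ : ℝ) * ((μ : ℝ) * χ + c * (S / μ))
        - 2 * ((μ : ℝ) * χ + c * (S / μ)) := by
    have hstep : ∀ d : Fin μ, ∑ ω, p ω *
        (∑ i : Fin μ, ∑ j : Fin μ,
          (hammingDist (Function.update x d (y' ω) i) (Function.update x d (y' ω) j) : ℝ))
        = (S - 2 * (∑ j : Fin μ, (hammingDist (x d) (x j) : ℝ)))
          + 2 * ((μ : ℝ) * χ + c * (S / μ))
          - 2 * (∑ ω, p ω * (hammingDist (x d) (y' ω) : ℝ)) := by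
      intro d
      have : ∑ ω, p ω *
          (∑ i : Fin μ, ∑ j : Fin μ,
            (hammingDist (Function.update x d (y' ω) i) (Function.update x d (y' ω) j) : ℝ))
          = ∑ ω, (p ω * (S - 2 * (∑ j : Fin μ, (hammingDist (x d) (x j) : ℝ)))
            + 2 * (p ω * (∑ j : Fin μ, (hammingDist (x j) (y' ω) : ℝ)))
            - 2 * (p ω * (hammingDist (x d) (y' ω) : ℝ))) := by
        refine Finset.sum_congr rfl fun ω _ => ?_
        rw [key d (y' ω)]
        ring
      rw [this]
      rw [Finset.sum_sub_distrib, Finset.sum_add_distrib, ← Finset.sum_mul,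
        ← Finset.mul_sum, ← Finset.mul_sum, hsum, hT]
      ring
    rw [Finset.sum_congr rfl fun d _ => hstep d]
    simp only [Finset.sum_sub_distrib, Finset.sum_add_distrib, ← Finset.mul_sum,
      Finset.sum_const, card_univ, Fintype.card_fin, nsmul_eq_mul]
    rw [hEd, ← hSdef]
    ring
  rw [hmain, hcdef]
  field_simp
  ring
end

section
/- Let c be a diversity-neutral binary crossover operator on {0,1}^n, i.e., E[H(c(x_1,x_2), z) + H(c(x_2,x_1), z)] = H(x_1,z) + H(x_2,z) for all x_1, x_2, z. If x_i, x_j are two independent uniform random members of the population P = {x_1,...,x_μ} and y = c(x_i, x_j), then E[S_P(y)] = S(P)/μ. -/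
open Finset

/-- For a diversity-neutral crossover `c` (given by offspring
distributions `D x₁ x₂`) applied to two independent uniform parents from the
population, `E[S_P(y)] = S(P)/μ`. -/
theorem stmt_15 (n μ : ℕ) (hμ : 0 < μ) (x : Fin μ → (Fin n → Bool))
    (D : (Fin n → Bool) → (Fin n → Bool) → (Fin n → Bool) → ℝ)
    (hD0 : ∀ x₁ x₂ y, 0 ≤ D x₁ x₂ y)
    (hD1 : ∀ x₁ x₂, ∑ y : Fin n → Bool, D x₁ x₂ y = 1)
    (hneutral : ∀ x₁ x₂ z : Fin n → Bool,
      (∑ y : Fin n → Bool, D x₁ x₂ y * (hammingDist y z : ℝ))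
        + (∑ y : Fin n → Bool, D x₂ x₁ y * (hammingDist y z : ℝ))
      = (hammingDist x₁ z : ℝ) + (hammingDist x₂ z : ℝ)) :
    (1 / (μ : ℝ) ^ 2) * ∑ i : Fin μ, ∑ j : Fin μ,
        (∑ y : Fin n → Bool, D (x i) (x j) y * ∑ k : Fin μ, (hammingDist (x k) y : ℝ))
      = (∑ i : Fin μ, ∑ j : Fin μ, (hammingDist (x i) (x j) : ℝ)) / (μ : ℝ) := by
  set A : Fin μ → Fin μ → ℝ := fun i j =>
    ∑ y : Fin n → Bool, D (x i) (x j) y * ∑ k : Fin μ, (hammingDist (x k) y : ℝ) with hA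
  set S : ℝ := ∑ i : Fin μ, ∑ j : Fin μ, (hammingDist (x i) (x j) : ℝ) with hS
  have hswap : ∀ a b : Fin n → Bool,
      (∑ y : Fin n → Bool, D a b y * ∑ k : Fin μ, (hammingDist (x k) y : ℝ))
        = ∑ k : Fin μ, ∑ y : Fin n → Bool, D a b y * (hammingDist y (x k) : ℝ) := by
    intro a b
    rw [Finset.sum_comm]
    congr 1
    ext y
    rw [Finset.mul_sum]
    congr 1
    ext k
    rw [hammingDist_comm]
  have key : ∀ i j : Fin μ, A i j + A j i
      = ∑ k : Fin μ, ((hammingDist (x i) (x k) : ℝ) + (hammingDist (x j) (x k) : ℝ)) := by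
    intro i j
    rw [hA]
    simp only
    rw [hswap, hswap, ← Finset.sum_add_distrib]
    exact Finset.sum_congr rfl fun k _ => hneutral (x i) (x j) (x k)
  have hsum : ∑ i : Fin μ, ∑ j : Fin μ, A i j = (μ : ℝ) * S := by
    have h2 : 2 * (∑ i : Fin μ, ∑ j : Fin μ, A i j)
        = ∑ i : Fin μ, ∑ j : Fin μ, (A i j + A j i) := by
      simp only [Finset.sum_add_distrib, two_mul]
      congr 1
      exact Finset.sum_comm ..
    have h3 : ∑ i : Fin μ, ∑ j : Fin μ, (A i j + A j i) = 2 * ((μ : ℝ) * S) := by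
      have : ∀ i j : Fin μ, A i j + A j i
          = ∑ k : Fin μ, ((hammingDist (x i) (x k) : ℝ) + (hammingDist (x j) (x k) : ℝ)) :=
        key
      calc ∑ i : Fin μ, ∑ j : Fin μ, (A i j + A j i)
          = ∑ i : Fin μ, ∑ j : Fin μ, ∑ k : Fin μ,
              ((hammingDist (x i) (x k) : ℝ) + (hammingDist (x j) (x k) : ℝ)) := by
            exact Finset.sum_congr rfl fun i _ => Finset.sum_congr rfl fun j _ => key i j
        _ = 2 * ((μ : ℝ) * S) := by
            simp only [Finset.sum_add_distrib, Finset.sum_const, Finset.card_univ,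
              Fintype.card_fin, nsmul_eq_mul]
            rw [hS, ← Finset.mul_sum]
            ring
    linarith
  rw [hsum]
  have hμ' : (μ : ℝ) ≠ 0 := Nat.cast_ne_zero.mpr hμ.ne'
  field_simp
end

section
/- Every diversity-neutral binary crossover operator is respectful: if both parents agree on bit position i, then the offspring has the same value at position i with probability 1. -/
open Finset

lemma hd_real {n : ℕ} (y z : Fin n → Bool) :
    (hammingDist y z : ℝ) = ∑ j : Fin n, (if y j = z j then 0 else 1) := by
  rw [hammingDist, Finset.card_filter]
  push_cast
  congr 1
  ext j
  by_cases h : y j = z j <;> simp [h]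

lemma hd_update {n : ℕ} (y z : Fin n → Bool) (i : Fin n) :
    (hammingDist y (Function.update z i (!(z i))) : ℝ)
      = (hammingDist y z : ℝ) + (if y i = z i then 1 else -1) := by
  rw [hd_real, hd_real]
  rw [← sub_eq_iff_eq_add', ← Finset.sum_sub_distrib]
  rw [Finset.sum_eq_single i]
  · rcases Bool.eq_false_or_eq_true (z i) with h | h <;>
      rcases Bool.eq_false_or_eq_true (y i) with h' | h' <;>
      simp [h, h', Function.update]
  · intro j _ hj
    simp [Function.update, hj]
  · simp

lemma sum_pm {n : ℕ} (f : (Fin n → Bool) → ℝ) (i : Fin n) (b : Bool)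
    (hsum : ∑ y : Fin n → Bool, f y = 1) :
    ∑ y : Fin n → Bool, f y * (if y i = b then 1 else -1)
      = 2 * (∑ y ∈ Finset.univ.filter (fun y : Fin n → Bool => y i = b), f y) - 1 := by
  have h : ∀ y : Fin n → Bool,
      f y * (if y i = b then 1 else -1) = 2 * (if y i = b then f y else 0) - f y := by
    intro y; by_cases h : y i = b <;> simp [h] <;> ring
  rw [Finset.sum_congr rfl (fun y _ => h y), Finset.sum_sub_distrib, ← Finset.mul_sum, hsum,
    Finset.sum_filter]

/-- Lemma 13: Every diversity-neutral binary crossover (given by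
offspring distributions `D x₁ x₂`) is respectful: if both parents agree at
position `i`, the offspring has the same value at position `i` with probability 1. -/
theorem stmt_17 (n : ℕ)
    (D : (Fin n → Bool) → (Fin n → Bool) → (Fin n → Bool) → ℝ)
    (hD0 : ∀ x₁ x₂ y, 0 ≤ D x₁ x₂ y)
    (hD1 : ∀ x₁ x₂, ∑ y : Fin n → Bool, D x₁ x₂ y = 1)
    (hneutral : ∀ x₁ x₂ z : Fin n → Bool,
      (∑ y : Fin n → Bool, D x₁ x₂ y * (hammingDist y z : ℝ))
        + (∑ y : Fin n → Bool, D x₂ x₁ y * (hammingDist y z : ℝ))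
      = (hammingDist x₁ z : ℝ) + (hammingDist x₂ z : ℝ)) :
    ∀ (x₁ x₂ : Fin n → Bool) (i : Fin n), x₁ i = x₂ i →
      ∑ y ∈ Finset.univ.filter (fun y : Fin n → Bool => y i = x₁ i), D x₁ x₂ y = 1 := by
  intro x₁ x₂ i hx
  have h1 := hneutral x₁ x₂ (Function.update x₁ i (!(x₁ i)))
  have h0 := hneutral x₁ x₂ x₁
  simp_rw [hd_update, mul_add, Finset.sum_add_distrib] at h1
  rw [if_pos trivial, if_pos hx.symm] at h1
  have hkey : (∑ y : Fin n → Bool, D x₁ x₂ y * (if y i = x₁ i then 1 else -1))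
      + (∑ y : Fin n → Bool, D x₂ x₁ y * (if y i = x₁ i then 1 else -1)) = 2 := by
    linarith [h1, h0]
  rw [sum_pm _ i _ (hD1 x₁ x₂), sum_pm _ i _ (hD1 x₂ x₁)] at hkey
  have hle1 : ∑ y ∈ Finset.univ.filter (fun y : Fin n → Bool => y i = x₁ i), D x₁ x₂ y ≤ 1 := by
    rw [← hD1 x₁ x₂]
    exact Finset.sum_le_sum_of_subset_of_nonneg (Finset.filter_subset _ _)
      (fun y _ _ => hD0 x₁ x₂ y)
  have hle2 : ∑ y ∈ Finset.univ.filter (fun y : Fin n → Bool => y i = x₁ i), D x₂ x₁ y ≤ 1 := by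
    rw [← hD1 x₂ x₁]
    exact Finset.sum_le_sum_of_subset_of_nonneg (Finset.filter_subset _ _)
      (fun y _ _ => hD0 x₂ x₁ y)
  linarith
end

section
/- Every respectful binary crossover with an order-independent mask is diversity-neutral: for all x_1, x_2, z ∈ {0,1}^n, E[H(c(x_1,x_2), z) + H(c(x_2,x_1), z)] = H(x_1,z) + H(x_2,z). -/
open Finset

lemma hd_eq_sum {n : ℕ} (x z : Fin n → Bool) :
    (hammingDist x z : ℝ) = ∑ i : Fin n, (if x i = z i then (0:ℝ) else 1) := by
  rw [hammingDist, Finset.card_filter]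
  push_cast
  apply Finset.sum_congr rfl
  intro i _
  by_cases h : x i = z i <;> simp [h]

/-- Lemma 15: Every respectful binary crossover given by a random
mask (mask value `false` selects the first parent, `true` the second) whose
distribution `M` is order-independent is diversity-neutral. -/
theorem stmt_19 (n : ℕ)
    (M : (Fin n → Bool) → (Fin n → Bool) → (Fin n → Bool) → ℝ)
    (hM0 : ∀ x₁ x₂ a, 0 ≤ M x₁ x₂ a)
    (hM1 : ∀ x₁ x₂, ∑ a : Fin n → Bool, M x₁ x₂ a = 1)
    (hOIM : ∀ x₁ x₂ a, M x₁ x₂ a = M x₂ x₁ a) :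
    ∀ x₁ x₂ z : Fin n → Bool,
      (∑ a : Fin n → Bool,
          M x₁ x₂ a * (hammingDist (fun i => if a i then x₂ i else x₁ i) z : ℝ))
        + (∑ a : Fin n → Bool,
          M x₂ x₁ a * (hammingDist (fun i => if a i then x₁ i else x₂ i) z : ℝ))
      = (hammingDist x₁ z : ℝ) + (hammingDist x₂ z : ℝ) := by
  intro x₁ x₂ z
  have key : ∀ a : Fin n → Bool,
      (hammingDist (fun i => if a i then x₂ i else x₁ i) z : ℝ)
        + (hammingDist (fun i => if a i then x₁ i else x₂ i) z : ℝ)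
      = (hammingDist x₁ z : ℝ) + (hammingDist x₂ z : ℝ) := by
    intro a
    simp only [hd_eq_sum, ← Finset.sum_add_distrib]
    apply Finset.sum_congr rfl
    intro i _
    by_cases h : a i <;> simp [h, add_comm]
  calc (∑ a : Fin n → Bool,
          M x₁ x₂ a * (hammingDist (fun i => if a i then x₂ i else x₁ i) z : ℝ))
        + (∑ a : Fin n → Bool,
          M x₂ x₁ a * (hammingDist (fun i => if a i then x₁ i else x₂ i) z : ℝ))
      = ∑ a : Fin n → Bool, M x₁ x₂ a *
          ((hammingDist x₁ z : ℝ) + (hammingDist x₂ z : ℝ)) := by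
        rw [← Finset.sum_add_distrib]
        apply Finset.sum_congr rfl
        intro a _
        rw [hOIM x₂ x₁ a, ← mul_add, key a]
    _ = (hammingDist x₁ z : ℝ) + (hammingDist x₂ z : ℝ) := by
        rw [← Finset.sum_mul, hM1, one_mul]
end
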